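/- arXiv:1812.03688 — 2 statements merged into one kernel-verified Lean document; each statement's English description precedes it below -/
import Mathlib

section
/- Let ω ∈ [0,1] and let B ∈ C^{n×n}. If the ω-comparison matrix B_ω is a nonsingular M-matrix, then B is nonsingular and |B⁻¹| ≤ (B_ω)⁻¹ entrywise. -/
/-!
Since `ω·Re z + (1-ω)·Im z ≤ |z|`, the triangle inequality in each row gives
`B_ω |x| ≤ |B x|` entrywise for every vector `x`. A nonsingular M-matrix `M` is inverse
monotone: `M y ≥ 0` forces `y ≥ 0`, hence `M v ≤ w` forces `v ≤ M⁻¹ w`. Taking `B x = 0` gives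
`|x| ≤ 0`, so `B` is nonsingular; taking for `x` the `j`-th column of `B⁻¹`, so that `B x = e_j`,
gives `|B⁻¹ e_j| ≤ B_ω⁻¹ e_j`.
-/

open Matrix Filter Kronecker

noncomputable section

/-- The ω-weighted linear functional `z ↦ ω·Re z + (1-ω)·Im z`. -/
def wlin (ω : ℝ) (z : ℂ) : ℝ := ω * z.re + (1 - ω) * z.im

/-- The ω-comparison matrix of a complex square matrix. -/
def omegaComp {N : Type*} [DecidableEq N] (ω : ℝ) (B : Matrix N N ℂ) : Matrix N N ℝ :=
  Matrix.of fun i j => if i = j then wlin ω (B i i) else -‖B i j‖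

/-- A real square matrix is a nonsingular M-matrix: nonpositive off-diagonal entries and
`M *ᵥ u > 0` entrywise for some entrywise positive `u`. -/
def IsNonsingMMatrix {N : Type*} [Fintype N] (M : Matrix N N ℝ) : Prop :=
  (∀ i j, i ≠ j → M i j ≤ 0) ∧ ∃ u : N → ℝ, (∀ i, 0 < u i) ∧ ∀ i, 0 < (M *ᵥ u) i

/-- Entrywise absolute value of a complex matrix. -/
def cabs {α β : Type*} (M : Matrix α β ℂ) : Matrix α β ℝ :=
  Matrix.of fun i j => ‖M i j‖

namespace IsNonsingMMatrix

variable {N : Type*} [Fintype N] {M : Matrix N N ℝ}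

/- If some `x i < 0`, let `t < 0` be the least ratio `x k / u k`, attained at `i₀`. Then
`z = x - t • u ≥ 0` with `z i₀ = 0`, so `(M *ᵥ z) i₀ ≤ 0` by the sign pattern of `M`, while
`(M *ᵥ z) i₀ = (M *ᵥ x) i₀ - t * (M *ᵥ u) i₀ > 0`. -/
theorem nonneg_of_mulVec_nonneg (hM : IsNonsingMMatrix M) {x : N → ℝ} (hx : 0 ≤ M *ᵥ x) :
    0 ≤ x := by
  obtain ⟨hoff, u, hu, hMu⟩ := hM
  by_contra hneg
  obtain ⟨i, hi⟩ : ∃ i, x i < 0 := by simpa [Pi.le_def] using hneg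
  obtain ⟨i₀, -, hmin⟩ :=
    Finset.exists_min_image Finset.univ (fun k => x k / u k) ⟨i, Finset.mem_univ i⟩
  set t := x i₀ / u i₀
  have ht : t < 0 := (hmin i (Finset.mem_univ i)).trans_lt (div_neg_of_neg_of_pos hi (hu i))
  set z := x - t • u
  have hz : ∀ k, 0 ≤ z k := fun k => by
    have := (le_div_iff₀ (hu k)).mp (hmin k (Finset.mem_univ k))
    simp only [z, Pi.sub_apply, Pi.smul_apply, smul_eq_mul]
    linarith
  have hz₀ : z i₀ = 0 := by
    simp only [z, t, Pi.sub_apply, Pi.smul_apply, smul_eq_mul, div_mul_cancel₀ _ (hu i₀).ne']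
    ring
  have hpos : 0 < (M *ᵥ z) i₀ := by
    simp only [z, mulVec_sub, mulVec_smul, Pi.sub_apply, Pi.smul_apply, smul_eq_mul]
    have hx₀ : 0 ≤ (M *ᵥ x) i₀ := hx i₀
    nlinarith [mul_neg_of_neg_of_pos ht (hMu i₀)]
  have hnonpos : (M *ᵥ z) i₀ ≤ 0 := by
    refine Finset.sum_nonpos fun k _ => ?_
    rcases eq_or_ne k i₀ with rfl | hk
    · simp [hz₀]
    · exact mul_nonpos_of_nonpos_of_nonneg (hoff i₀ k (Ne.symm hk)) (hz k)
  linarith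

theorem isUnit_det [DecidableEq N] (hM : IsNonsingMMatrix M) : IsUnit M.det := by
  rw [isUnit_iff_ne_zero]
  intro hdet
  obtain ⟨v, hv, hMv⟩ := exists_mulVec_eq_zero_iff.mpr hdet
  have hpos : 0 ≤ v := hM.nonneg_of_mulVec_nonneg (by rw [hMv])
  have hneg : 0 ≤ -v := hM.nonneg_of_mulVec_nonneg (by rw [mulVec_neg, hMv, neg_zero])
  exact hv (le_antisymm (neg_nonneg.mp hneg) hpos)

theorem le_inv_mulVec [DecidableEq N] (hM : IsNonsingMMatrix M) {v w : N → ℝ}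
    (h : M *ᵥ v ≤ w) : v ≤ M⁻¹ *ᵥ w := by
  have hMinv : M *ᵥ (M⁻¹ *ᵥ w) = w := by
    rw [mulVec_mulVec, mul_nonsing_inv M hM.isUnit_det, one_mulVec]
  have := hM.nonneg_of_mulVec_nonneg (x := M⁻¹ *ᵥ w - v) (by rwa [mulVec_sub, hMinv, sub_nonneg])
  exact sub_nonneg.mp this

end IsNonsingMMatrix

lemma wlin_le_norm {ω : ℝ} (hω : ω ∈ Set.Icc (0 : ℝ) 1) (z : ℂ) : wlin ω z ≤ ‖z‖ := by
  obtain ⟨h0, h1⟩ := hω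
  unfold wlin
  nlinarith [Complex.re_le_norm z, Complex.im_le_norm z]

theorem omegaComp_mulVec_norm_le {N : Type*} [Fintype N] [DecidableEq N] {ω : ℝ}
    (hω : ω ∈ Set.Icc (0 : ℝ) 1) (B : Matrix N N ℂ) (x : N → ℂ) :
    omegaComp ω B *ᵥ (fun j => ‖x j‖) ≤ fun i => ‖(B *ᵥ x) i‖ := by
  intro i
  set S := ∑ j ∈ Finset.univ.erase i, B i j * x j
  have hBx : (B *ᵥ x) i = B i i * x i + S := by
    rw [mulVec, dotProduct, ← Finset.add_sum_erase _ _ (Finset.mem_univ i)]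
  have hMx : (omegaComp ω B *ᵥ fun j => ‖x j‖) i
      = wlin ω (B i i) * ‖x i‖ - ∑ j ∈ Finset.univ.erase i, ‖B i j‖ * ‖x j‖ := by
    rw [mulVec, dotProduct, ← Finset.add_sum_erase _ _ (Finset.mem_univ i), sub_eq_add_neg,
      ← Finset.sum_neg_distrib]
    congr 1
    · simp [omegaComp]
    · refine Finset.sum_congr rfl fun j hj => ?_
      simp [omegaComp, (Finset.ne_of_mem_erase hj).symm]
  have hdiag : ‖B i i * x i‖ ≤ ‖(B *ᵥ x) i‖ + ‖S‖ := by
    simpa [hBx] using norm_sub_le ((B *ᵥ x) i) S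
  have hS : ‖S‖ ≤ ∑ j ∈ Finset.univ.erase i, ‖B i j‖ * ‖x j‖ :=
    (norm_sum_le _ _).trans_eq (by simp only [norm_mul])
  have hw := mul_le_mul_of_nonneg_right (wlin_le_norm hω (B i i)) (norm_nonneg (x i))
  rw [norm_mul] at hdiag
  rw [hMx]
  linarith

theorem isUnit_det_of_isNonsingMMatrix_omegaComp {N : Type*} [Fintype N] [DecidableEq N]
    {ω : ℝ} (hω : ω ∈ Set.Icc (0 : ℝ) 1) {B : Matrix N N ℂ}
    (hM : IsNonsingMMatrix (omegaComp ω B)) : IsUnit B.det := by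
  rw [isUnit_iff_ne_zero]
  intro hdet
  obtain ⟨v, hv, hBv⟩ := exists_mulVec_eq_zero_iff.mpr hdet
  have h0 : omegaComp ω B *ᵥ (fun j => ‖v j‖) ≤ 0 :=
    (omegaComp_mulVec_norm_le hω B v).trans_eq (by ext; simp [hBv])
  have h := hM.le_inv_mulVec h0
  rw [mulVec_zero] at h
  exact hv (funext fun j => norm_le_zero_iff.mp (h j))

/-- If the ω-comparison matrix `B_ω` of a complex square matrix `B` is a
nonsingular M-matrix, then `B` is nonsingular and `|B⁻¹| ≤ (B_ω)⁻¹` entrywise. -/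
theorem stmt0 {n : ℕ} (ω : ℝ) (hω : ω ∈ Set.Icc (0 : ℝ) 1)
    (B : Matrix (Fin n) (Fin n) ℂ)
    (hM : IsNonsingMMatrix (omegaComp ω B)) :
    IsUnit B.det ∧ ∀ i j, ‖B⁻¹ i j‖ ≤ (omegaComp ω B)⁻¹ i j := by
  have hB := isUnit_det_of_isNonsingMMatrix_omegaComp hω hM
  refine ⟨hB, fun i j => ?_⟩
  have hcol : B *ᵥ (B⁻¹ *ᵥ Pi.single j 1) = Pi.single j 1 := by
    rw [mulVec_mulVec, mul_nonsing_inv B hB, one_mulVec]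
  have hnorm : (fun k => ‖(B *ᵥ (B⁻¹ *ᵥ Pi.single j 1)) k‖) = Pi.single j 1 := by
    ext k
    rw [hcol]
    rcases eq_or_ne k j with rfl | hk <;> simp [*]
  have h := hM.le_inv_mulVec ((omegaComp_mulVec_norm_le hω B _).trans_eq hnorm) i
  simpa [mulVec_single_one] using h
end
end

section
/- Under the hypotheses of the previous setting (ω ∈ [0,1]; Q = [[D, −C], [−B, A]] with Q_ω a nonsingular M-matrix and Q_ω·1 > 0; Q̃ = [[D̃, −C̃], [−B̃, Ã]] a real nonsingular M-matrix with Q̃ ≤ Q_ω, Q̃·1 > 0; Φ̃ the minimal nonnegative solution of XC̃X − XD̃ − ÃX + B̃ = 0), let Φ be the unique solution of XCX − XD − AX + B = 0 with |Φ| ≤ Φ̃. Then D − CΦ is nonsingular, every eigenvalue λ of D − CΦ satisfies ω·Re(λ) + (1−ω)·Im(λ) > 0, and Φ is the unique solution of the NARE with this spectral property, i.e., if X solves XCX − XD − AX + B = 0 and every eigenvalue λ of D − CX satisfies ω·Re(λ) + (1−ω)·Im(λ) > 0, then X = Φ. -/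
/-!
Everything is compared with the real M-matrix equation. Because `Q̃ 1 > 0`, the monotone
fixed-point iteration for the tilde NARE started at `0` stays in `{Z ≥ 0, Z 1 ≤ 1}`, so the minimal
solution satisfies `Φ̃ 1 ≤ 1`. Then `D̃ - C̃ Φ̃` and `Ã - Φ̃ C̃` map the positive vectors `1` and
`1 - Φ̃ 1` to positive vectors, and they lie entrywise below the ω-comparison matrices of
`D - C Φ` and `A - Φ C`. A weighted Gershgorin argument puts both spectra in the half-plane
`ω Re + (1 - ω) Im > 0`. Finally, for another solution `X` with this spectral property,
`Y = Φ - X` solves the Sylvester equation `(A - Φ C) Y + Y (D - C X) = 0`, whose coefficients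
have no pair of eigenvalues summing to zero, so `Y = 0`.
-/

open Matrix Filter Kronecker

noncomputable section

lemma wlin_add (ω : ℝ) (z w : ℂ) : wlin ω (z + w) = wlin ω z + wlin ω w := by
  simp only [wlin, Complex.add_re, Complex.add_im]
  ring

lemma abs_wlin_le_norm {ω : ℝ} (hω : ω ∈ Set.Icc (0 : ℝ) 1) (z : ℂ) : |wlin ω z| ≤ ‖z‖ := by
  obtain ⟨h0, h1⟩ := hω
  obtain ⟨hre, hre'⟩ := abs_le.1 (Complex.abs_re_le_norm z)
  obtain ⟨him, him'⟩ := abs_le.1 (Complex.abs_im_le_norm z)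
  rw [abs_le, wlin]
  constructor <;> nlinarith

lemma wlin_le_wlin_add_norm_sub {ω : ℝ} (hω : ω ∈ Set.Icc (0 : ℝ) 1) (z w : ℂ) :
    wlin ω z ≤ wlin ω w + ‖z - w‖ := by
  have hzw := wlin_add ω w (z - w)
  rw [add_sub_cancel] at hzw
  linarith [(abs_le.1 (abs_wlin_le_norm hω (z - w))).2]

lemma add_ne_zero_of_wlin_pos {ω : ℝ} {μ ν : ℂ} (hμ : 0 < wlin ω μ) (hν : 0 < wlin ω ν) :
    μ + ν ≠ 0 := fun h => by
  have := wlin_add ω μ ν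
  rw [h] at this
  linarith [show wlin ω 0 = 0 by simp [wlin]]

section Entrywise

variable {l m n : Type*} [Fintype m]

lemma mul_apply_nonneg {M : Matrix l m ℝ} {N : Matrix m n ℝ} (hM : ∀ i j, 0 ≤ M i j)
    (hN : ∀ i j, 0 ≤ N i j) (i : l) (k : n) : 0 ≤ (M * N) i k :=
  Finset.sum_nonneg fun j _ => mul_nonneg (hM i j) (hN j k)

lemma mul_apply_le_mul_apply {M M' : Matrix l m ℝ} {N N' : Matrix m n ℝ}
    (hM : ∀ i j, 0 ≤ M i j) (hMM' : ∀ i j, M i j ≤ M' i j)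
    (hN : ∀ i j, 0 ≤ N i j) (hNN' : ∀ i j, N i j ≤ N' i j) (i : l) (k : n) :
    (M * N) i k ≤ (M' * N') i k :=
  Finset.sum_le_sum fun j _ => mul_le_mul (hMM' i j) (hNN' j k) (hN j k) ((hM i j).trans (hMM' i j))

lemma norm_mul_apply_le {M : Matrix l m ℂ} {N : Matrix m n ℂ} {M' : Matrix l m ℝ}
    {N' : Matrix m n ℝ} (hM : ∀ i j, ‖M i j‖ ≤ M' i j) (hN : ∀ i j, ‖N i j‖ ≤ N' i j)
    (i : l) (k : n) : ‖(M * N) i k‖ ≤ (M' * N') i k :=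
  (norm_sum_le _ _).trans <| Finset.sum_le_sum fun j _ =>
    (norm_mul _ _).trans_le <| mul_le_mul (hM i j) (hN j k) (norm_nonneg _)
      ((norm_nonneg _).trans (hM i j))

lemma mulVec_nonneg {M : Matrix l m ℝ} {v : m → ℝ} (hM : ∀ i j, 0 ≤ M i j) (hv : 0 ≤ v) :
    0 ≤ M *ᵥ v :=
  fun i => dotProduct_nonneg_of_nonneg (fun j => hM i j) hv

lemma mulVec_mono_right {M : Matrix l m ℝ} {v w : m → ℝ} (hM : ∀ i j, 0 ≤ M i j)
    (hvw : v ≤ w) : M *ᵥ v ≤ M *ᵥ w :=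
  fun i => dotProduct_le_dotProduct_of_nonneg_left hvw (fun j => hM i j)

lemma mulVec_mono_left {M M' : Matrix l m ℝ} {v : m → ℝ} (hMM' : ∀ i j, M i j ≤ M' i j)
    (hv : 0 ≤ v) : M *ᵥ v ≤ M' *ᵥ v :=
  fun i => dotProduct_le_dotProduct_of_nonneg_right (fun j => hMM' i j) hv

end Entrywise

section OmegaComparison

variable {ι : Type*} [DecidableEq ι]

@[simp]
lemma omegaComp_apply_self (ω : ℝ) (M : Matrix ι ι ℂ) (i : ι) :
    omegaComp ω M i i = wlin ω (M i i) := by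
  simp [omegaComp]

lemma omegaComp_apply_of_ne (ω : ℝ) (M : Matrix ι ι ℂ) {i j : ι} (hij : i ≠ j) :
    omegaComp ω M i j = -‖M i j‖ := by
  simp [omegaComp, hij]

lemma apply_nonpos_of_le_omegaComp {ω : ℝ} {M : Matrix ι ι ℂ} {M' : Matrix ι ι ℝ}
    (hM : ∀ i j, M' i j ≤ omegaComp ω M i j) (i j : ι) (hij : i ≠ j) : M' i j ≤ 0 :=
  (hM i j).trans (by simp [omegaComp_apply_of_ne _ _ hij])

lemma omegaComp_fromBlocks {m n : Type*} [DecidableEq m] [DecidableEq n] (ω : ℝ)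
    (A : Matrix m m ℂ) (B : Matrix m n ℂ) (C : Matrix n m ℂ) (D : Matrix n n ℂ) :
    omegaComp ω (fromBlocks A B C D) =
      fromBlocks (omegaComp ω A) (-cabs B) (-cabs C) (omegaComp ω D) := by
  ext (i | i) (j | j) <;> simp [omegaComp, cabs]

lemma sub_le_omegaComp_sub {ω : ℝ} (hω : ω ∈ Set.Icc (0 : ℝ) 1) {M P : Matrix ι ι ℂ}
    {M' P' : Matrix ι ι ℝ} (hM : ∀ i j, M' i j ≤ omegaComp ω M i j)
    (hP : ∀ i j, ‖P i j‖ ≤ P' i j) (i j : ι) :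
    (M' - P') i j ≤ omegaComp ω (M - P) i j := by
  have hMij := hM i j
  rcases eq_or_ne i j with rfl | hij
  · have := wlin_le_wlin_add_norm_sub hω (M i i) (M i i - P i i)
    rw [sub_sub_cancel] at this
    rw [omegaComp_apply_self] at hMij ⊢
    simp only [Matrix.sub_apply]
    linarith [hP i i]
  · rw [omegaComp_apply_of_ne _ _ hij] at hMij ⊢
    simp only [Matrix.sub_apply]
    linarith [hP i j, norm_sub_le (M i j) (P i j)]

variable [Fintype ι]

theorem wlin_pos_of_mem_spectrum {ω : ℝ} (hω : ω ∈ Set.Icc (0 : ℝ) 1) {M : Matrix ι ι ℂ}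
    {M' : Matrix ι ι ℝ} (hM' : ∀ i j, M' i j ≤ omegaComp ω M i j) {u : ι → ℝ}
    (hu : ∀ i, 0 < u i) (hM'u : ∀ i, 0 < (M' *ᵥ u) i) {μ : ℂ} (hμ : μ ∈ spectrum ℂ M) :
    0 < wlin ω μ := by
  have hMu i : 0 < (omegaComp ω M *ᵥ u) i :=
    (hM'u i).trans_le (mulVec_mono_left hM' (fun j => (hu j).le) i)
  -- Gershgorin's theorem for the similar matrix `diag(u)⁻¹ M diag(u)`
  have hu0 : ∀ i, (u i : ℂ) ≠ 0 := fun i => Complex.ofReal_ne_zero.2 (hu i).ne'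
  let U : (Matrix ι ι ℂ)ˣ :=
    ⟨diagonal fun i => (u i : ℂ), diagonal fun i => (u i : ℂ)⁻¹, by simp [hu0], by simp [hu0]⟩
  rw [← spectrum.units_conjugate' (u := U), ← Matrix.spectrum_toLin',
    ← Module.End.hasEigenvalue_iff_mem_spectrum] at hμ
  obtain ⟨i, hi⟩ := eigenvalue_mem_ball hμ
  have hentry : ∀ j, ((U⁻¹ : (Matrix ι ι ℂ)ˣ) * M * U : Matrix ι ι ℂ) i j =
      M i j * ((u j / u i : ℝ) : ℂ) := by
    intro j
    simp only [U, Units.inv_mk, diagonal_mul, mul_diagonal, Complex.ofReal_div]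
    field_simp
  have hradius : ∑ j ∈ Finset.univ.erase i, ‖M i j‖ * u j < wlin ω (M i i) * u i := by
    have := hMu i
    rw [mulVec, dotProduct, ← Finset.add_sum_erase _ _ (Finset.mem_univ i),
      omegaComp_apply_self] at this
    have hoff : ∀ j ∈ Finset.univ.erase i, omegaComp ω M i j * u j = -(‖M i j‖ * u j) :=
      fun j hj => by rw [omegaComp_apply_of_ne _ _ (Finset.ne_of_mem_erase hj).symm, neg_mul]
    rw [Finset.sum_congr rfl hoff, Finset.sum_neg_distrib] at this
    linarith
  simp only [hentry, mem_closedBall_iff_norm, norm_mul, Complex.norm_real, Real.norm_eq_abs,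
    abs_of_pos (div_pos (hu _) (hu i)), div_self (hu i).ne', Complex.ofReal_one, mul_one] at hi
  have hball : ‖μ - M i i‖ < wlin ω (M i i) := by
    refine hi.trans_lt ?_
    simp only [← mul_div_assoc, ← Finset.sum_div]
    exact (div_lt_iff₀ (hu i)).2 hradius
  linarith [wlin_le_wlin_add_norm_sub hω (M i i) μ, norm_sub_rev μ (M i i)]

lemma isUnit_det_of_forall_wlin_pos {ω : ℝ} {M : Matrix ι ι ℂ}
    (h : ∀ μ ∈ spectrum ℂ M, 0 < wlin ω μ) : IsUnit M.det :=
  (isUnit_iff_isUnit_det _).1 <| not_not.1 fun h0 => by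
    simpa [wlin] using h 0 ((spectrum.zero_mem_iff ℂ).2 h0)

end OmegaComparison

section Sylvester

open Polynomial

variable {K : Type*} {p q : Type*} [Fintype p] [DecidableEq p] [Fintype q] [DecidableEq q]

lemma aeval_mul_eq_mul_aeval [CommRing K] {M : Matrix p p K} {N : Matrix q q K}
    {Y : Matrix p q K} (hY : M * Y = Y * N) (f : K[X]) : aeval M f * Y = Y * aeval N f := by
  have hpow (k : ℕ) : M ^ k * Y = Y * N ^ k := by
    induction k with
    | zero => simp
    | succ k ih =>
      rw [pow_succ, pow_succ, Matrix.mul_assoc, hY, ← Matrix.mul_assoc, ih, Matrix.mul_assoc]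
  induction f using Polynomial.induction_on' with
  | add f g hf hg => rw [map_add, map_add, Matrix.add_mul, Matrix.mul_add, hf, hg]
  | monomial k a =>
    rw [aeval_monomial, aeval_monomial, ← Algebra.smul_def, ← Algebra.smul_def,
      Matrix.smul_mul, Matrix.mul_smul, hpow]

theorem eq_zero_of_mul_add_mul_eq_zero [Field K] [IsAlgClosed K] {M : Matrix p p K}
    {N : Matrix q q K} (hMN : ∀ μ ∈ spectrum K M, ∀ ν ∈ spectrum K N, μ + ν ≠ 0)
    {Y : Matrix p q K} (hY : M * Y + Y * N = 0) : Y = 0 := by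
  have hχ : Y * aeval (-N) M.charpoly = 0 := by
    rw [← aeval_mul_eq_mul_aeval (by rw [Matrix.mul_neg, eq_neg_of_add_eq_zero_left hY]),
      aeval_self_charpoly, Matrix.zero_mul]
  have hunit : IsUnit (aeval (-N) M.charpoly) := by
    by_contra hnu
    rw [(IsAlgClosed.splits M.charpoly).eq_prod_roots_of_monic M.charpoly_monic] at hnu
    obtain ⟨k, hkN, hkM⟩ := spectrum.exists_mem_of_not_isUnit_aeval_prod hnu
    rw [← spectrum.neg_eq, Set.mem_neg] at hkN
    exact hMN k (mem_spectrum_iff_isRoot_charpoly.2 hkM) (-k) hkN (add_neg_cancel k)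
  rw [← Matrix.mul_nonsing_inv_cancel_right _ Y ((isUnit_iff_isUnit_det _).1 hunit), hχ,
    Matrix.zero_mul]

end Sylvester

section RiccatiAlgebra

variable {R : Type*} {m n : Type*} [Fintype m] [Fintype n]
  {A : Matrix m m R} {B : Matrix m n R} {C : Matrix n m R} {D : Matrix n n R}

lemma sylvester_of_riccati [Ring R] {X Φ : Matrix m n R}
    (hX : X * C * X - X * D - A * X + B = 0) (hΦ : Φ * C * Φ - Φ * D - A * Φ + B = 0) :
    (A - Φ * C) * (Φ - X) + (Φ - X) * (D - C * X) = 0 := by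
  have : (A - Φ * C) * (Φ - X) + (Φ - X) * (D - C * X) =
      (X * C * X - X * D - A * X + B) - (Φ * C * Φ - Φ * D - A * Φ + B) := by
    simp only [Matrix.sub_mul, Matrix.mul_sub, ← Matrix.mul_assoc]
    abel
  rw [this, hX, hΦ, sub_zero]

lemma sub_mul_mulVec_sub_mulVec_of_riccati [CommRing R] {X : Matrix m n R}
    (hX : X * C * X - X * D - A * X + B = 0) (u : m → R) (v : n → R) :
    (A - X * C) *ᵥ (u - X *ᵥ v) = A *ᵥ u - B *ᵥ v + X *ᵥ (D *ᵥ v - C *ᵥ u) := by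
  have hXv := congrArg (· *ᵥ v) hX
  simp only [add_mulVec, sub_mulVec, ← mulVec_mulVec, zero_mulVec] at hXv
  simp only [sub_mulVec, mulVec_sub, ← mulVec_mulVec]
  linear_combination hXv

end RiccatiAlgebra

lemma sub_mul_apply_nonpos_of_ne {m n : Type*} [Fintype n] {A : Matrix m m ℝ}
    {X : Matrix m n ℝ} {C : Matrix n m ℝ} (hA : ∀ i j, i ≠ j → A i j ≤ 0)
    (hX : ∀ i j, 0 ≤ X i j) (hC : ∀ i j, 0 ≤ C i j) (i j : m) (hij : i ≠ j) :
    (A - X * C) i j ≤ 0 := by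
  rw [Matrix.sub_apply]
  linarith [hA i j hij, mul_apply_nonneg hX hC i j]

lemma pos_of_mulVec_pos {ι : Type*} [Fintype ι] {M : Matrix ι ι ℝ} {v : ι → ℝ}
    (hM : ∀ i j, i ≠ j → M i j ≤ 0) (hv : 0 ≤ v) (hMv : ∀ i, 0 < (M *ᵥ v) i) (i : ι) :
    0 < v i := by
  refine (hv i).lt_of_ne fun hvi => (hMv i).not_ge <| Finset.sum_nonpos fun j _ => ?_
  rcases eq_or_ne i j with rfl | hij
  · simp [← hvi]
  · exact mul_nonpos_of_nonpos_of_nonneg (hM i j hij) (hv j)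

theorem exists_isFixedPt_of_monotoneOn {α : Type*} [ConditionallyCompleteLattice α]
    [TopologicalSpace α] [SupConvergenceClass α] [T2Space α] {F : α → α} (hF : Continuous F)
    {S : Set α} (hSc : IsClosed S) (hSb : BddAbove S) (hFS : Set.MapsTo F S S)
    (hmono : MonotoneOn F S) {x : α} (hx : x ∈ S) (hxF : x ≤ F x) :
    ∃ z ∈ S, Function.IsFixedPt F z := by
  have hmem (k : ℕ) : F^[k] x ∈ S := hFS.iterate k hx
  have horbit : Monotone fun k => F^[k] x := by
    refine monotone_nat_of_le_succ fun k => ?_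
    induction k with
    | zero => simpa using hxF
    | succ k ih =>
      simpa only [Function.iterate_succ_apply'] using hmono (hmem k) (hmem (k + 1)) ih
  have hbdd : BddAbove (Set.range fun k => F^[k] x) := hSb.mono (Set.range_subset_iff.2 hmem)
  have hlim := tendsto_atTop_ciSup horbit hbdd
  exact ⟨_, hSc.mem_of_tendsto hlim (Eventually.of_forall hmem),
    isFixedPt_of_tendsto_iterate hlim hF.continuousAt⟩

lemma smul_one_sub_apply_nonneg {n : Type*} [DecidableEq n] {M : Matrix n n ℝ}
    (hM : ∀ i j, i ≠ j → M i j ≤ 0) {θ : ℝ} (hθ : ∀ i, M i i ≤ θ) (i j : n) :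
    0 ≤ (θ • 1 - M) i j := by
  rcases eq_or_ne i j with rfl | hij
  · simpa using hθ i
  · simpa [one_apply_ne hij] using hM i j hij

lemma exists_pos_smul_one_sub_nonneg {m n : Type*} [Finite m] [Finite n] [DecidableEq m]
    [DecidableEq n] {A : Matrix m m ℝ} {D : Matrix n n ℝ} (hA : ∀ i j, i ≠ j → A i j ≤ 0)
    (hD : ∀ i j, i ≠ j → D i j ≤ 0) :
    ∃ θ : ℝ, 0 < θ ∧ (∀ i j, 0 ≤ (θ • 1 - A) i j) ∧ ∀ i j, 0 ≤ (θ • 1 - D) i j := by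
  obtain ⟨a, ha⟩ := (Set.finite_range fun i => A i i).bddAbove
  obtain ⟨d, hd⟩ := (Set.finite_range fun j => D j j).bddAbove
  refine ⟨max 1 (max a d), zero_lt_one.trans_le (le_max_left _ _),
    smul_one_sub_apply_nonneg hA fun i => ?_, smul_one_sub_apply_nonneg hD fun j => ?_⟩
  · exact (ha ⟨i, rfl⟩).trans ((le_max_left _ _).trans (le_max_right _ _))
  · exact (hd ⟨j, rfl⟩).trans ((le_max_right _ _).trans (le_max_right _ _))

section RealRiccati

variable {m n : Type*} [Fintype m] [Fintype n]
  {A : Matrix m m ℝ} {B : Matrix m n ℝ} {C : Matrix n m ℝ} {D : Matrix n n ℝ}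

lemma shifted_riccati_mulVec_one_le [DecidableEq m] [DecidableEq n] (hC : ∀ i j, 0 ≤ C i j)
    (hBA : B *ᵥ 1 ≤ A *ᵥ 1) (hCD : C *ᵥ 1 ≤ D *ᵥ 1) {θ : ℝ} (hθ : 0 ≤ θ)
    (hA : ∀ i j, 0 ≤ (θ • 1 - A) i j)
    {X : Matrix m n ℝ} (hX : ∀ i j, 0 ≤ X i j) (hX1 : X *ᵥ 1 ≤ 1) :
    (X * C * X + (θ • 1 - A) * X + X * (θ • 1 - D) + B) *ᵥ 1 ≤ (2 * θ) • 1 := by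
  have hθ1 : X *ᵥ (θ • 1) ≤ θ • 1 := by
    rw [mulVec_smul]
    exact smul_le_smul_of_nonneg_left hX1 hθ
  calc (X * C * X + (θ • 1 - A) * X + X * (θ • 1 - D) + B) *ᵥ 1
      = X *ᵥ (C *ᵥ (X *ᵥ 1) + (θ • 1 - D) *ᵥ 1) + (θ • 1 - A) *ᵥ (X *ᵥ 1) + B *ᵥ 1 := by
        simp only [add_mulVec, mulVec_add, ← mulVec_mulVec]
        abel
    _ ≤ X *ᵥ (C *ᵥ 1 + (θ • 1 - D) *ᵥ 1) + (θ • 1 - A) *ᵥ 1 + B *ᵥ 1 := by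
        gcongr ?_ + ?_ + _
        · exact mulVec_mono_right hX (add_le_add (mulVec_mono_right hC hX1) le_rfl)
        · exact mulVec_mono_right hA hX1
    _ = X *ᵥ (θ • 1 - (D *ᵥ 1 - C *ᵥ 1)) + (θ • 1 - (A *ᵥ 1 - B *ᵥ 1)) := by
        simp only [sub_mulVec, smul_mulVec, one_mulVec]
        abel_nf
    _ ≤ X *ᵥ (θ • 1) + θ • 1 := by
        gcongr ?_ + ?_
        · exact mulVec_mono_right hX (sub_le_self _ (sub_nonneg.2 hCD))
        · exact sub_le_self _ (sub_nonneg.2 hBA)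
    _ ≤ (2 * θ) • 1 := by
        rw [two_mul, add_smul]
        exact add_le_add hθ1 le_rfl

lemma shifted_riccati_apply_mono [DecidableEq m] [DecidableEq n] (hC : ∀ i j, 0 ≤ C i j)
    {θ : ℝ} (hA : ∀ i j, 0 ≤ (θ • 1 - A) i j) (hD : ∀ i j, 0 ≤ (θ • 1 - D) i j) {X Y : Matrix m n ℝ}
    (hX : ∀ i j, 0 ≤ X i j) (hXY : ∀ i j, X i j ≤ Y i j) (i : m) (j : n) :
    (X * C * X + (θ • 1 - A) * X + X * (θ • 1 - D) + B : Matrix m n ℝ) i j ≤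
      (Y * C * Y + (θ • 1 - A) * Y + Y * (θ • 1 - D) + B : Matrix m n ℝ) i j := by
  simp only [Matrix.add_apply]
  gcongr ?_ + ?_ + ?_ + _
  · exact mul_apply_le_mul_apply (mul_apply_nonneg hX hC)
      (mul_apply_le_mul_apply hX hXY hC fun _ _ => le_rfl) hX hXY i j
  · exact mul_apply_le_mul_apply hA (fun _ _ => le_rfl) hX hXY i j
  · exact mul_apply_le_mul_apply hX hXY hD (fun _ _ => le_rfl) i j

lemma riccati_eq_zero_of_shifted_eq [DecidableEq m] [DecidableEq n] {θ : ℝ}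
    {X : Matrix m n ℝ} (hX : X * C * X + (θ • 1 - A) * X + X * (θ • 1 - D) + B = (2 * θ) • X) :
    X * C * X - X * D - A * X + B = 0 := by
  calc _ = X * C * X + (θ • 1 - A) * X + X * (θ • 1 - D) + B - (2 * θ) • X := by
        simp only [Matrix.sub_mul, Matrix.mul_sub, Matrix.smul_mul, Matrix.mul_smul,
          Matrix.one_mul, Matrix.mul_one]
        module
    _ = 0 := sub_eq_zero.2 hX

theorem exists_nonneg_riccati_solution_mulVec_one_le [DecidableEq m] [DecidableEq n]
    (hA : ∀ i j, i ≠ j → A i j ≤ 0) (hD : ∀ i j, i ≠ j → D i j ≤ 0) (hB : ∀ i j, 0 ≤ B i j)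
    (hC : ∀ i j, 0 ≤ C i j) (hBA : B *ᵥ 1 ≤ A *ᵥ 1) (hCD : C *ᵥ 1 ≤ D *ᵥ 1) :
    ∃ Z : Matrix m n ℝ, (∀ i j, 0 ≤ Z i j) ∧ Z * C * Z - Z * D - A * Z + B = 0 ∧
      Z *ᵥ 1 ≤ 1 := by
  obtain ⟨θ, hθ, hNA, hND⟩ := exists_pos_smul_one_sub_nonneg hA hD
  let G : Matrix m n ℝ → Matrix m n ℝ := fun X =>
    X * C * X + (θ • 1 - A) * X + X * (θ • 1 - D) + B
  -- Matrices carry no order instance, so the iteration runs in `m → n → ℝ`.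
  let F : (m → n → ℝ) → (m → n → ℝ) := fun X => (2 * θ)⁻¹ • G (of X)
  let S : Set (m → n → ℝ) := {X | 0 ≤ X ∧ of X *ᵥ 1 ≤ 1}
  have hc : 0 ≤ (2 * θ)⁻¹ := by positivity
  have hFc : Continuous F := (by fun_prop : Continuous fun X => (2 * θ)⁻¹ • G X)
  have hSc : IsClosed S := (isClosed_le continuous_const continuous_id).inter
    (isClosed_le (by fun_prop : Continuous fun X : Matrix m n ℝ => X *ᵥ 1) continuous_const)
  have hSb : BddAbove S := ⟨1, fun X ⟨hX0, hX1⟩ i j =>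
    (Finset.single_le_sum (fun k _ => hX0 i k) (Finset.mem_univ j)).trans
      (by simpa [mulVec, dotProduct] using hX1 i)⟩
  have hmono : MonotoneOn F S := fun X hX Y _ hXY i j =>
    smul_le_smul_of_nonneg_left (shifted_riccati_apply_mono hC hNA hND hX.1 hXY i j) hc
  have hFS : Set.MapsTo F S S := by
    intro X hX
    refine ⟨fun i j => smul_nonneg hc ((hB i j).trans ?_), ?_⟩
    · simpa [G] using shifted_riccati_apply_mono (B := B) (X := 0) (Y := of X) hC hNA hND
        (fun _ _ => le_rfl) hX.1 i j
    · calc of (F X) *ᵥ 1 = (2 * θ)⁻¹ • (G X *ᵥ 1) := by rw [← smul_mulVec]; rfl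
        _ ≤ (2 * θ)⁻¹ • (2 * θ) • 1 := smul_le_smul_of_nonneg_left
          (shifted_riccati_mulVec_one_le hC hBA hCD hθ.le hNA hX.1 hX.2) hc
        _ = 1 := by rw [smul_smul, inv_mul_cancel₀ (by positivity), one_smul]
  have h0 : (0 : m → n → ℝ) ∈ S := ⟨le_rfl, by simp⟩
  obtain ⟨Z, ⟨hZ0, hZ1⟩, hZF⟩ :=
    exists_isFixedPt_of_monotoneOn hFc hSc hSb hFS hmono h0 (hFS h0).1
  refine ⟨of Z, hZ0, riccati_eq_zero_of_shifted_eq (θ := θ) ?_, hZ1⟩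
  conv_rhs => rw [← hZF.eq]
  change _ = (2 * θ) • (2 * θ)⁻¹ • G (of Z)
  rw [smul_smul, mul_inv_cancel₀ (by positivity), one_smul]

lemma sub_mul_mulVec_one_pos (hC : ∀ i j, 0 ≤ C i j) (hCD : ∀ i, (C *ᵥ 1) i < (D *ᵥ 1) i)
    {X : Matrix m n ℝ} (hX1 : X *ᵥ 1 ≤ 1) (i : n) : 0 < ((D - C * X) *ᵥ 1) i := by
  rw [sub_mulVec, ← mulVec_mulVec, Pi.sub_apply, sub_pos]
  exact (mulVec_mono_right hC hX1 i).trans_lt (hCD i)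

lemma sub_mul_mulVec_one_sub_pos {X : Matrix m n ℝ} (hX : ∀ i j, 0 ≤ X i j)
    (hXR : X * C * X - X * D - A * X + B = 0) (hBA : ∀ i, (B *ᵥ 1) i < (A *ᵥ 1) i)
    (hCD : C *ᵥ 1 ≤ D *ᵥ 1) (i : m) : 0 < ((A - X * C) *ᵥ (1 - X *ᵥ 1)) i := by
  rw [sub_mul_mulVec_sub_mulVec_of_riccati hXR, Pi.add_apply, Pi.sub_apply]
  exact add_pos_of_pos_of_nonneg (sub_pos.2 (hBA i)) (mulVec_nonneg hX (sub_nonneg.2 hCD) i)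

end RealRiccati

theorem stmt4_general {m n : ℕ} (ω : ℝ) (hω : ω ∈ Set.Icc (0 : ℝ) 1)
    (A : Matrix (Fin m) (Fin m) ℂ) (B : Matrix (Fin m) (Fin n) ℂ)
    (C : Matrix (Fin n) (Fin m) ℂ) (D : Matrix (Fin n) (Fin n) ℂ)
    (At : Matrix (Fin m) (Fin m) ℝ) (Bt : Matrix (Fin m) (Fin n) ℝ)
    (Ct : Matrix (Fin n) (Fin m) ℝ) (Dt : Matrix (Fin n) (Fin n) ℝ)
    (hQtle : ∀ i j, Matrix.fromBlocks Dt (-Ct) (-Bt) At i j ≤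
      omegaComp ω (Matrix.fromBlocks D (-C) (-B) A) i j)
    (hQt1 : ∀ i, 0 < ((Matrix.fromBlocks Dt (-Ct) (-Bt) At) *ᵥ 1) i)
    (Φt : Matrix (Fin m) (Fin n) ℝ)
    (hΦtPos : ∀ i j, 0 ≤ Φt i j)
    (hΦtSol : Φt * Ct * Φt - Φt * Dt - At * Φt + Bt = 0)
    (hΦtMin : ∀ Z : Matrix (Fin m) (Fin n) ℝ, (∀ i j, 0 ≤ Z i j) →
      Z * Ct * Z - Z * Dt - At * Z + Bt = 0 → ∀ i j, Φt i j ≤ Z i j)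
    (Φ : Matrix (Fin m) (Fin n) ℂ)
    (hΦSol : Φ * C * Φ - Φ * D - A * Φ + B = 0)
    (hΦle : ∀ i j, ‖Φ i j‖ ≤ Φt i j) :
    IsUnit (D - C * Φ).det ∧
    (∀ μ ∈ spectrum ℂ (D - C * Φ), 0 < wlin ω μ) ∧
    ∀ X : Matrix (Fin m) (Fin n) ℂ, X * C * X - X * D - A * X + B = 0 →
      (∀ μ ∈ spectrum ℂ (D - C * X), 0 < wlin ω μ) → X = Φ := by
  simp only [omegaComp_fromBlocks, cabs, Sum.forall, forall_and, fromBlocks_apply₁₁,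
    fromBlocks_apply₁₂, fromBlocks_apply₂₁, fromBlocks_apply₂₂, Matrix.neg_apply, of_apply,
    norm_neg, neg_le_neg_iff] at hQtle
  obtain ⟨⟨hD, hB⟩, hC, hA⟩ := hQtle
  obtain ⟨hCD, hBA⟩ : (∀ i, (Ct *ᵥ 1) i < (Dt *ᵥ 1) i) ∧ ∀ i, (Bt *ᵥ 1) i < (At *ᵥ 1) i := by
    simpa [fromBlocks_mulVec, Sum.forall, neg_mulVec, ← sub_eq_add_neg] using hQt1
  have hCt : ∀ i j, 0 ≤ Ct i j := fun i j => (norm_nonneg _).trans (hC i j)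
  have hΦt1 : Φt *ᵥ 1 ≤ 1 := by
    obtain ⟨Z, hZ0, hZ, hZ1⟩ := exists_nonneg_riccati_solution_mulVec_one_le
      (apply_nonpos_of_le_omegaComp hA) (apply_nonpos_of_le_omegaComp hD)
      (fun i j => (norm_nonneg _).trans (hB i j)) hCt (fun i => (hBA i).le) (fun i => (hCD i).le)
    exact (mulVec_mono_left (hΦtMin Z hZ0 hZ) zero_le_one).trans hZ1
  have hspecD : ∀ μ ∈ spectrum ℂ (D - C * Φ), 0 < wlin ω μ := fun μ =>
    wlin_pos_of_mem_spectrum hω (sub_le_omegaComp_sub hω hD (norm_mul_apply_le hC hΦle))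
      (fun _ => one_pos) (sub_mul_mulVec_one_pos hCt hCD hΦt1)
  have hw := sub_mul_mulVec_one_sub_pos hΦtPos hΦtSol hBA (fun i => (hCD i).le)
  have hspecA : ∀ μ ∈ spectrum ℂ (A - Φ * C), 0 < wlin ω μ := fun μ =>
    wlin_pos_of_mem_spectrum hω (sub_le_omegaComp_sub hω hA (norm_mul_apply_le hΦle hC))
      (pos_of_mulVec_pos (sub_mul_apply_nonpos_of_ne (apply_nonpos_of_le_omegaComp hA) hΦtPos hCt)
        (sub_nonneg.2 hΦt1) hw) hw
  refine ⟨isUnit_det_of_forall_wlin_pos hspecD, hspecD, fun X hX hspecX => ?_⟩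
  exact (sub_eq_zero.1 (eq_zero_of_mul_add_mul_eq_zero
    (fun μ hμ ν hν => add_ne_zero_of_wlin_pos (hspecA μ hμ) (hspecX ν hν))
    (sylvester_of_riccati hX hΦSol))).symm

/-- The solution `Φ` with `|Φ| ≤ Φ̃` is extremal: `D − CΦ` is nonsingular, its
spectrum lies strictly on the upper-right side of the line `ω·Re + (1−ω)·Im = 0`, and `Φ` is the
unique solution of the NARE with this spectral property. -/
theorem stmt4 {m n : ℕ} (ω : ℝ) (hω : ω ∈ Set.Icc (0 : ℝ) 1)
    (A : Matrix (Fin m) (Fin m) ℂ) (B : Matrix (Fin m) (Fin n) ℂ)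
    (C : Matrix (Fin n) (Fin m) ℂ) (D : Matrix (Fin n) (Fin n) ℂ)
    (At : Matrix (Fin m) (Fin m) ℝ) (Bt : Matrix (Fin m) (Fin n) ℝ)
    (Ct : Matrix (Fin n) (Fin m) ℝ) (Dt : Matrix (Fin n) (Fin n) ℝ)
    (hQ : IsNonsingMMatrix (omegaComp ω (Matrix.fromBlocks D (-C) (-B) A)))
    (hQ1 : ∀ i, 0 < ((omegaComp ω (Matrix.fromBlocks D (-C) (-B) A)) *ᵥ 1) i)
    (hQt : IsNonsingMMatrix (Matrix.fromBlocks Dt (-Ct) (-Bt) At))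
    (hQtle : ∀ i j, Matrix.fromBlocks Dt (-Ct) (-Bt) At i j ≤
      omegaComp ω (Matrix.fromBlocks D (-C) (-B) A) i j)
    (hQt1 : ∀ i, 0 < ((Matrix.fromBlocks Dt (-Ct) (-Bt) At) *ᵥ 1) i)
    (Φt : Matrix (Fin m) (Fin n) ℝ)
    (hΦtPos : ∀ i j, 0 ≤ Φt i j)
    (hΦtSol : Φt * Ct * Φt - Φt * Dt - At * Φt + Bt = 0)
    (hΦtMin : ∀ Z : Matrix (Fin m) (Fin n) ℝ, (∀ i j, 0 ≤ Z i j) →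
      Z * Ct * Z - Z * Dt - At * Z + Bt = 0 → ∀ i j, Φt i j ≤ Z i j)
    (Φ : Matrix (Fin m) (Fin n) ℂ)
    (hΦSol : Φ * C * Φ - Φ * D - A * Φ + B = 0)
    (hΦle : ∀ i j, ‖Φ i j‖ ≤ Φt i j) :
    IsUnit (D - C * Φ).det ∧
    (∀ μ ∈ spectrum ℂ (D - C * Φ), 0 < wlin ω μ) ∧
    ∀ X : Matrix (Fin m) (Fin n) ℂ, X * C * X - X * D - A * X + B = 0 →
      (∀ μ ∈ spectrum ℂ (D - C * X), 0 < wlin ω μ) → X = Φ :=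
  stmt4_general ω hω A B C D At Bt Ct Dt hQtle hQt1 Φt hΦtPos hΦtSol hΦtMin Φ hΦSol hΦle
end
end
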